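/- Let k ∈ W^{1,1}(0,T) be nonnegative and nonincreasing, H : ℝ → ℝ be C¹ and convex, and φ : [0,T] → ℝ be bounded measurable. Then for almost all t ∈ [0,T], H'(φ(t)) · d/dt(k*φ)(t) ≥ d/dt (k*(H∘φ))(t) + k(t)(−H(φ(t)) + H'(φ(t))φ(t)). -/

import Mathlib

/-!
Fix a point `t` and put `a = φ t`. By convexity the Bregman divergence
`ψ = H ∘ φ - H a - H'(a) (φ - a)` is nonnegative, and `k * ψ` is, by linearity, the combination
of `k * (H ∘ φ)`, `k * φ` and `∫₀^· k` whose derivative at `t` is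
`D₂ - H'(a) D₁ + (H'(a) a - H a) k t`; so it suffices to show that this derivative is `≤ 0`.
Since `k` is nonincreasing and `ψ ≥ 0`, for `y > t`
`(k * ψ)(y) - (k * ψ)(t) ≤ k 0 ∫_t^y ψ`, and at a Lebesgue point of `φ` and `H ∘ φ` the right
side is `o(y - t)` because `ψ` vanishes at `t`.
-/

open MeasureTheory intervalIntegral

open Set Filter Topology

noncomputable def volterraConv (κ f : ℝ → ℝ) (t : ℝ) : ℝ := ∫ s in (0:ℝ)..t, κ (t - s) * f s

theorem Continuous.memLp_top_comp {α : Type*} [MeasurableSpace α] {μ : Measure α} {H : ℝ → ℝ}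
    {φ : α → ℝ} (hH : Continuous H) (hφ : Measurable φ) {M : ℝ} (hφM : ∀ x, |φ x| ≤ M) :
    MemLp (H ∘ φ) ⊤ μ := by
  obtain ⟨B, hB⟩ := (isCompact_Icc (a := -M) (b := M)).exists_bound_of_continuousOn
    hH.continuousOn
  exact memLp_top_of_bound (hH.measurable.comp hφ).aestronglyMeasurable B
    (ae_of_all _ fun x => hB _ (abs_le.1 (hφM x)))

theorem ConvexOn.deriv_mul_sub_le {S : Set ℝ} {f : ℝ → ℝ} {x y : ℝ} (hf : ConvexOn ℝ S f)
    (hx : x ∈ S) (hy : y ∈ S) (hd : DifferentiableAt ℝ f x) :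
    deriv f x * (y - x) ≤ f y - f x := by
  rcases lt_trichotomy x y with hxy | rfl | hxy
  · have := hf.deriv_le_slope hx hy hxy hd
    rwa [slope_def_field, le_div_iff₀ (sub_pos.2 hxy)] at this
  · simp
  · have := hf.slope_le_deriv hy hx hxy hd
    rw [slope_def_field, div_le_iff₀ (sub_pos.2 hxy)] at this
    linarith

theorem le_of_hasDerivAt_of_eventually_sub_le {F G : ℝ → ℝ} {L L' t : ℝ}
    (hF : HasDerivAt F L t) (hG : HasDerivAt G L' t)
    (h : ∀ᶠ y in 𝓝[>] t, F y - F t ≤ G y - G t) : L ≤ L' := by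
  have hslope := (hasDerivWithinAt_iff_tendsto_slope' (s := Ioi t) (lt_irrefl t)).1
    ((hF.sub hG).hasDerivWithinAt (s := Ioi t))
  refine sub_nonpos.1 (le_of_tendsto hslope ?_)
  filter_upwards [h, self_mem_nhdsWithin] with y hy (hty : t < y)
  rw [slope_def_field]
  exact div_nonpos_of_nonpos_of_nonneg (by simp only [Pi.sub_apply]; linarith) (sub_pos.2 hty).le

section Volterra

variable {κ f g : ℝ → ℝ}

theorem Antitone.intervalIntegrable_comp_sub_left_mul (hκ : Antitone κ) (hf : MemLp f ⊤ volume)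
    (τ a b : ℝ) : IntervalIntegrable (fun s => κ (τ - s) * f s) volume a b := by
  have hκτ : Monotone fun s => κ (τ - s) := fun s s' h => hκ (by linarith)
  exact IntegrableOn.intervalIntegrable <|
    (hκτ.locallyIntegrable.integrableOn_isCompact isCompact_uIcc).mul_of_top_left
      (hf.restrict _)

theorem volterraConv_sub_mul_add_const (hκ : Antitone κ) (hf : MemLp f ⊤ volume)
    (hg : MemLp g ⊤ volume) (p c τ : ℝ) :
    volterraConv κ (fun s => f s - p * g s + c) τ =
      volterraConv κ f τ - p * volterraConv κ g τ + c * ∫ u in (0:ℝ)..τ, κ u := by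
  have hif := hκ.intervalIntegrable_comp_sub_left_mul hf τ 0 τ
  have hig := (hκ.intervalIntegrable_comp_sub_left_mul hg τ 0 τ).const_mul p
  have hi1 : IntervalIntegrable (fun s => c * κ (τ - s)) volume 0 τ := by
    simpa using (hκ.intervalIntegrable_comp_sub_left_mul (memLp_top_const 1) τ 0 τ).const_mul c
  have hκ1 : ∫ s in (0:ℝ)..τ, κ (τ - s) = ∫ u in (0:ℝ)..τ, κ u := by
    simp [intervalIntegral.integral_comp_sub_left]
  unfold volterraConv
  rw [← hκ1, ← intervalIntegral.integral_const_mul, ← intervalIntegral.integral_const_mul,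
    ← integral_sub hif hig, ← integral_add (hif.sub hig) hi1]
  refine integral_congr fun s _ => ?_
  ring

theorem volterraConv_sub_le (hκ : Antitone κ) (hf : MemLp f ⊤ volume) (hf0 : 0 ≤ f)
    {t y : ℝ} (ht : 0 ≤ t) (hty : t ≤ y) :
    volterraConv κ f y - volterraConv κ f t ≤
      κ 0 * ((∫ s in (0:ℝ)..y, f s) - ∫ s in (0:ℝ)..t, f s) := by
  have hi := hκ.intervalIntegrable_comp_sub_left_mul hf
  have hf1 : ∀ a b, IntervalIntegrable f volume a b := fun a b =>
    ((hf.locallyIntegrable le_top).integrableOn_isCompact isCompact_uIcc).intervalIntegrable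
  have hpast : ∫ s in (0:ℝ)..t, κ (y - s) * f s ≤ ∫ s in (0:ℝ)..t, κ (t - s) * f s :=
    integral_mono_on ht (hi y 0 t) (hi t 0 t) fun s _ =>
      mul_le_mul_of_nonneg_right (hκ (by linarith)) (hf0 s)
  have hrecent : ∫ s in t..y, κ (y - s) * f s ≤ κ 0 * ∫ s in t..y, f s := by
    rw [← intervalIntegral.integral_const_mul]
    exact integral_mono_on hty (hi y t y) ((hf1 t y).const_mul _) fun s hs =>
      mul_le_mul_of_nonneg_right (hκ (by linarith [hs.2])) (hf0 s)
  rw [integral_interval_sub_left (hf1 0 y) (hf1 0 t)]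
  unfold volterraConv
  rw [← integral_add_adjacent_intervals (hi y 0 t) (hi y t y)]
  linarith

theorem hasDerivAt_volterraConv_nonpos (hκ : Antitone κ) (hf : MemLp f ⊤ volume)
    (hf0 : 0 ≤ f) {t L : ℝ} (ht : 0 ≤ t) (hF : HasDerivAt (volterraConv κ f) L t)
    (hprim : HasDerivAt (fun τ => ∫ s in (0:ℝ)..τ, f s) 0 t) : L ≤ 0 := by
  have := le_of_hasDerivAt_of_eventually_sub_le hF (hprim.const_mul (κ 0)) <| by
    filter_upwards [self_mem_nhdsWithin] with y (hty : t < y)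
    rw [← mul_sub]
    exact volterraConv_sub_le hκ hf hf0 ht hty.le
  simpa using this

theorem volterraConv_congr_kernel {κ' : ℝ → ℝ} {τ : ℝ} (hτ : 0 ≤ τ) (h : EqOn κ κ' (Icc 0 τ)) :
    volterraConv κ f τ = volterraConv κ' f τ := by
  refine integral_congr fun s hs => ?_
  rw [uIcc_of_le hτ] at hs
  have hmem : τ - s ∈ Icc 0 τ := ⟨by linarith [hs.2], by linarith [hs.1]⟩
  simp only [h hmem]

end Volterra

theorem ae_volterraConv_comp_convex_le {κ H φ : ℝ → ℝ} (hκ : Antitone κ)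
    (hH : Differentiable ℝ H) (hHconv : ConvexOn ℝ univ H)
    (hφ : MemLp φ ⊤ volume) (hHφ : MemLp (H ∘ φ) ⊤ volume) :
    ∀ᵐ t, 0 ≤ t → ∀ D₁ D₂, HasDerivAt (volterraConv κ φ) D₁ t →
      HasDerivAt (volterraConv κ (H ∘ φ)) D₂ t →
      D₂ + κ t * (-H (φ t) + deriv H (φ t) * φ t) ≤ deriv H (φ t) * D₁ := by
  filter_upwards [LocallyIntegrable.ae_hasDerivAt_integral hκ.locallyIntegrable,
    LocallyIntegrable.ae_hasDerivAt_integral (hφ.locallyIntegrable le_top),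
    LocallyIntegrable.ae_hasDerivAt_integral (hHφ.locallyIntegrable le_top)]
    with t hκt hφt hHφt ht D₁ D₂ hD₁ hD₂
  set p := deriv H (φ t)
  set c := p * φ t - H (φ t)
  set ψ : ℝ → ℝ := fun s => H (φ s) - p * φ s + c
  have hψ0 : 0 ≤ ψ := fun s => by
    have := hHconv.deriv_mul_sub_le (mem_univ (φ t)) (mem_univ (φ s)) (hH _)
    simp only [ψ, c, Pi.zero_apply]
    linarith
  have hψ : MemLp ψ ⊤ volume := (hHφ.sub (hφ.const_mul p)).add (memLp_top_const c)
  have hF : HasDerivAt (volterraConv κ ψ) (D₂ - p * D₁ + c * κ t) t := by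
    have hψconv : volterraConv κ ψ = fun τ => volterraConv κ (H ∘ φ) τ - p * volterraConv κ φ τ
        + c * ∫ u in (0:ℝ)..τ, κ u :=
      funext (volterraConv_sub_mul_add_const hκ hHφ hφ p c)
    rw [hψconv]
    exact (hD₂.sub (hD₁.const_mul p)).add ((hκt 0).const_mul c)
  have hΨ : HasDerivAt (fun τ => ∫ s in (0:ℝ)..τ, ψ s) 0 t := by
    have hψint : (fun τ => ∫ s in (0:ℝ)..τ, ψ s) = fun τ => (∫ s in (0:ℝ)..τ, (H ∘ φ) s)
        - p * (∫ s in (0:ℝ)..τ, φ s) + c * τ := by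
      funext τ
      simpa [volterraConv] using
        volterraConv_sub_mul_add_const (κ := fun _ => 1) antitone_const hHφ hφ p c τ
    have h := ((hHφt 0).sub ((hφt 0).const_mul p)).add ((hasDerivAt_id t).const_mul c)
    rw [show (H ∘ φ) t - p * φ t + c * 1 = 0 by simp only [Function.comp_apply, c]; ring] at h
    rw [hψint]
    exact h
  have := hasDerivAt_volterraConv_nonpos hκ hψ hψ0 ht hF hΨ
  linarith

theorem convolution_chain_rule_inequality_general
    (T : ℝ)
    (k : ℝ → ℝ)
    (hkmono : ∀ s ∈ Set.Icc (0:ℝ) T, ∀ t ∈ Set.Icc (0:ℝ) T, s ≤ t → k t ≤ k s)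
    (H : ℝ → ℝ) (hH : ContDiff ℝ 1 H) (hHconv : ConvexOn ℝ Set.univ H)
    (φ : ℝ → ℝ) (hφm : Measurable φ) (M : ℝ) (hφb : ∀ t, |φ t| ≤ M)
    (D₁ D₂ : ℝ → ℝ)
    (hD₁ : ∀ᵐ t ∂(volume.restrict (Set.Icc (0:ℝ) T)),
      HasDerivAt (fun τ => ∫ s in (0:ℝ)..τ, k (τ - s) * φ s) (D₁ t) t)
    (hD₂ : ∀ᵐ t ∂(volume.restrict (Set.Icc (0:ℝ) T)),
      HasDerivAt (fun τ => ∫ s in (0:ℝ)..τ, k (τ - s) * H (φ s)) (D₂ t) t) :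
    ∀ᵐ t ∂(volume.restrict (Set.Icc (0:ℝ) T)),
      deriv H (φ t) * D₁ t ≥
        D₂ t + k t * (-(H (φ t)) + deriv H (φ t) * φ t) := by
  rcases le_or_gt T 0 with hT | hT
  · have hnull : volume (Icc (0:ℝ) T) = 0 := by simp [Real.volume_Icc, hT]
    simp [Measure.restrict_eq_zero.2 hnull]
  set κ := IccExtend hT.le fun x : Icc 0 T => k x
  have hκ : Antitone κ :=
    Antitone.comp_monotone (fun x y hxy => hkmono x x.2 y y.2 hxy) (monotone_projIcc hT.le)
  have hκk : EqOn κ k (Icc 0 T) := fun x hx => IccExtend_of_mem hT.le _ hx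
  have hφ : MemLp φ ⊤ volume := memLp_top_of_bound hφm.aestronglyMeasurable M (ae_of_all _ hφb)
  have hHφ : MemLp (H ∘ φ) ⊤ volume := hH.continuous.memLp_top_comp hφm hφb
  have hIoo : ∀ᵐ t ∂volume.restrict (Icc (0:ℝ) T), t ∈ Ioo 0 T := by
    rw [← Measure.restrict_congr_set Ioo_ae_eq_Icc]
    exact ae_restrict_mem measurableSet_Ioo
  filter_upwards [ae_restrict_of_ae (ae_volterraConv_comp_convex_le hκ
    (hH.differentiable one_ne_zero) hHconv hφ hHφ), hD₁, hD₂, hIoo] with t ht h₁ h₂ htT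
  have hkernel : ∀ f, volterraConv κ f =ᶠ[𝓝 t] fun τ => ∫ s in (0:ℝ)..τ, k (τ - s) * f s := by
    intro f
    filter_upwards [Icc_mem_nhds htT.1 htT.2] with τ hτ
    exact volterraConv_congr_kernel hτ.1 (hκk.mono (Icc_subset_Icc le_rfl hτ.2))
  have := ht htT.1.le (D₁ t) (D₂ t) (h₁.congr_of_eventuallyEq (hkernel φ))
    (h₂.congr_of_eventuallyEq (hkernel (H ∘ φ)))
  rwa [hκk ⟨htT.1.le, htT.2.le⟩] at this

/-- For `k ∈ W^{1,1}(0,T)` nonnegative and nonincreasing, `H` convex and `C¹`, and `φ` bounded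
measurable, for a.e. `t ∈ [0,T]`:
`H'(φ(t)) · d/dt(k*φ)(t) ≥ d/dt (k*(H∘φ))(t) + k(t)(−H(φ(t)) + H'(φ(t))φ(t))`. -/
theorem convolution_chain_rule_inequality
    (T : ℝ) (hT : 0 < T)
    (k k' : ℝ → ℝ)
    (hk' : IntegrableOn k' (Set.Icc 0 T))
    (hk : ∀ t ∈ Set.Icc (0:ℝ) T, k t = k 0 + ∫ s in (0:ℝ)..t, k' s)
    (hknonneg : ∀ t ∈ Set.Icc (0:ℝ) T, 0 ≤ k t)
    (hkmono : ∀ s ∈ Set.Icc (0:ℝ) T, ∀ t ∈ Set.Icc (0:ℝ) T, s ≤ t → k t ≤ k s)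
    (H : ℝ → ℝ) (hH : ContDiff ℝ 1 H) (hHconv : ConvexOn ℝ Set.univ H)
    (φ : ℝ → ℝ) (hφm : Measurable φ) (M : ℝ) (hφb : ∀ t, |φ t| ≤ M)
    (D₁ D₂ : ℝ → ℝ)
    (hD₁ : ∀ᵐ t ∂(volume.restrict (Set.Icc (0:ℝ) T)),
      HasDerivAt (fun τ => ∫ s in (0:ℝ)..τ, k (τ - s) * φ s) (D₁ t) t)
    (hD₂ : ∀ᵐ t ∂(volume.restrict (Set.Icc (0:ℝ) T)),
      HasDerivAt (fun τ => ∫ s in (0:ℝ)..τ, k (τ - s) * H (φ s)) (D₂ t) t) :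
    ∀ᵐ t ∂(volume.restrict (Set.Icc (0:ℝ) T)),
      deriv H (φ t) * D₁ t ≥
        D₂ t + k t * (-(H (φ t)) + deriv H (φ t) * φ t) :=
  convolution_chain_rule_inequality_general T k hkmono H hH hHconv φ hφm M hφb D₁ D₂ hD₁ hD₂
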